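/- arXiv:1706.04933 — 4 statements merged into one kernel-verified Lean document; each statement's English description precedes it below -/
import Mathlib

section
/- GGI satisfies the Pigou–Dalton transfer principle: if x_i < x_j and 0 < ε < x_j − x_i, then G_w(x + ε e_i − ε e_j) ≤ G_w(x), where e_i, e_j are canonical basis vectors. -/
noncomputable def GGI {D : ℕ} (w x : Fin D → ℝ) : ℝ :=
  ⨆ π : Equiv.Perm (Fin D), ∑ d, w d * x (π d)

lemma swap_sum_eq {D : ℕ} (w x : Fin D → ℝ) (π : Equiv.Perm (Fin D))
    (a b : Fin D) (hab : a ≠ b) :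
    ∑ d, w d * x ((π * Equiv.swap a b) d)
      = (∑ d, w d * x (π d)) + (w b - w a) * x (π a) + (w a - w b) * x (π b) := by
  have h1 : ∑ d, w d * x ((π * Equiv.swap a b) d)
      = ∑ d, w (Equiv.swap a b d) * x (π d) := by
    rw [← Equiv.sum_comp (Equiv.swap a b)
      (fun d => w d * x ((π * Equiv.swap a b) d))]
    refine Finset.sum_congr rfl fun d _ => ?_
    simp [Equiv.Perm.mul_apply, Equiv.swap_apply_self]
  rw [h1]
  have h2 : ∀ d, w (Equiv.swap a b d) * x (π d)
      = w d * x (π d) + (if d = a then (w b - w a) * x (π a) else 0)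
          + (if d = b then (w a - w b) * x (π b) else 0) := by
    intro d
    rcases eq_or_ne d a with rfl | hda
    · simp [Equiv.swap_apply_left, hab, hab.symm]; ring
    rcases eq_or_ne d b with rfl | hdb
    · simp [Equiv.swap_apply_right, hda]; ring
    · simp [Equiv.swap_apply_of_ne_of_ne hda hdb, hda, hdb]
  rw [Finset.sum_congr rfl fun d _ => h2 d]
  simp [Finset.sum_add_distrib, Finset.sum_ite_eq']

/-- GGI satisfies the Pigou–Dalton transfer principle. -/
theorem stmt4 {D : ℕ} (w x : Fin D → ℝ)
    (hw : Antitone w) (hw0 : ∀ d, 0 ≤ w d)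
    (i j : Fin D) (hij : i ≠ j) (hx : x i < x j)
    (ε : ℝ) (hε : ε ∈ Set.Ioo 0 (x j - x i)) :
    GGI w (fun d => x d + ε * (if d = i then 1 else 0) - ε * (if d = j then 1 else 0))
      ≤ GGI w x := by
  obtain ⟨hε0, hε1⟩ := hε
  unfold GGI
  have hbdd : BddAbove (Set.range fun π : Equiv.Perm (Fin D) => ∑ d, w d * x (π d)) :=
    Set.Finite.bddAbove (Set.finite_range _)
  refine ciSup_le fun π => ?_
  set a := π.symm i with ha
  set b := π.symm j with hb
  have hπa : π a = i := π.apply_symm_apply i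
  have hπb : π b = j := π.apply_symm_apply j
  have hab : a ≠ b := fun h => hij (by rw [← hπa, ← hπb, h])
  have hkey : ∑ d, w d * (x (π d) + ε * (if π d = i then 1 else 0)
      - ε * (if π d = j then 1 else 0))
      = (∑ d, w d * x (π d)) + ε * w a - ε * w b := by
    have h : ∀ d, w d * (x (π d) + ε * (if π d = i then 1 else 0)
        - ε * (if π d = j then 1 else 0))
        = w d * x (π d) + ε * (if d = a then w a else 0)
            - ε * (if d = b then w b else 0) := by
      intro d
      have hi : (π d = i) ↔ (d = a) := by
        rw [ha]; exact ⟨fun h => by rw [← h, Equiv.symm_apply_apply],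
          fun h => by rw [h, Equiv.apply_symm_apply]⟩
      have hj : (π d = j) ↔ (d = b) := by
        rw [hb]; exact ⟨fun h => by rw [← h, Equiv.symm_apply_apply],
          fun h => by rw [h, Equiv.apply_symm_apply]⟩
      simp only [hi, hj]
      by_cases hda : d = a <;> by_cases hdb : d = b <;>
        simp [hda, hdb, hab, Ne.symm hab] <;> ring
    rw [Finset.sum_congr rfl fun d _ => h d]
    rw [Finset.sum_sub_distrib, Finset.sum_add_distrib]
    simp [← Finset.mul_sum, Finset.sum_ite_eq']
  have hrw : (∑ d, w d * (x (π d) + ε * (if π d = i then 1 else 0)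
      - ε * (if π d = j then 1 else 0)))
      = ∑ d, w d * ((fun d => x d + ε * (if d = i then 1 else 0)
          - ε * (if d = j then 1 else 0)) (π d)) := rfl
  rw [← hrw, hkey]
  rcases le_or_gt (w a) (w b) with hwab | hwab
  · calc (∑ d, w d * x (π d)) + ε * w a - ε * w b
        ≤ ∑ d, w d * x (π d) := by nlinarith
      _ ≤ _ := le_ciSup hbdd π
  · have hba : ¬ b ≤ a := fun h => absurd (hw h) (not_le.mpr hwab)
    have hsum := swap_sum_eq w x π a b hab
    calc (∑ d, w d * x (π d)) + ε * w a - ε * w b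
        ≤ ∑ d, w d * x ((π * Equiv.swap a b) d) := by
          rw [hsum, hπa, hπb]; nlinarith
      _ ≤ _ := le_ciSup hbdd (π * Equiv.swap a b)
end

section
/- Among vectors of ℝ^D with a fixed sum s, the constant vector (s/D, ..., s/D) minimizes G_w when the weights w are non-increasing and nonnegative: for all x with Σ_d x_d = s, G_w((s/D,...,s/D)) ≤ G_w(x). -/
/-- Among vectors with a fixed sum `s`, the constant vector `(s/D,...,s/D)`
minimizes GGI for non-increasing nonnegative weights. -/
theorem stmt9 {D : ℕ} (w x : Fin D → ℝ) (s : ℝ)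
    (hw : Antitone w) (hw0 : ∀ d, 0 ≤ w d)
    (hs : ∑ d, x d = s) :
    GGI w (fun _ => s / (D : ℝ)) ≤ GGI w x := by
  have hconst : GGI w (fun _ => s / (D : ℝ)) = ∑ d, w d * (s / (D : ℝ)) := by
    unfold GGI; exact ciSup_const
  rw [hconst]
  set g : Fin D → ℝ := fun d => x (Fin.revPerm.trans (Tuple.sort x) d) with hg
  have hganti : Antitone g := by
    have hmono := Tuple.monotone_sort x
    intro a b hab
    exact hmono (by simpa using Fin.rev_le_rev.mpr hab)
  have hmv : Monovary w g := hw.monovary hganti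
  have hcheb := hmv.sum_mul_sum_le_card_mul_sum
  have hgsum : ∑ d, g d = s := by
    rw [hg, ← hs]
    exact Equiv.sum_comp (Fin.revPerm.trans (Tuple.sort x)) x
  have hkey : ∑ d, w d * (s / (D : ℝ)) ≤ ∑ d, w d * g d := by
    rcases Nat.eq_zero_or_pos D with hD | hD
    · subst hD; simp
    · have hDpos : (0 : ℝ) < (D : ℝ) := by exact_mod_cast hD
      rw [← Finset.sum_mul]
      rw [div_eq_mul_inv, ← mul_assoc]
      rw [mul_inv_le_iff₀ hDpos, mul_comm ((∑ d, w d * g d)) ((D:ℝ))]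
      calc (∑ d, w d) * s = (∑ d, w d) * ∑ d, g d := by rw [hgsum]
        _ ≤ (D : ℝ) * ∑ d, w d * g d := by
            simpa [Fintype.card_fin] using hcheb
  refine hkey.trans ?_
  have : ∑ d, w d * g d ≤ GGI w x := by
    unfold GGI
    exact le_ciSup (f := fun π : Equiv.Perm (Fin D) => ∑ d, w d * x (π d))
      (Set.Finite.bddAbove (Set.finite_range _)) (Fin.revPerm.trans (Tuple.sort x))
  exact this
end

section
/- Let f^{(1)}, ..., f^{(T)} be convex functions on the probability simplex Δ_K with gradients bounded in Euclidean norm by G. Consider iterates α^{(1)} = (1/K,...,1/K) and α^{(t+1)} = Π_{Δ_K^{η_t}}(α^{(t)} − η_t ∇f^{(t)}(α^{(t)})), projecting onto the truncated simplex Δ_K^{η_t} = {α ∈ Δ_K : α_k ≥ η_t/K ∀k}, with step sizes η_t ∈ [0,1]. Then for every α ∈ Δ_K: Σ_{t=1}^T f^{(t)}(α^{(t)}) − Σ_{t=1}^T f^{(t)}(α) ≤ 1/η_T + ((G²+1)/2) Σ_{t=1}^T η_t. -/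
/-- The probability simplex in `EuclideanSpace ℝ (Fin K)`. -/
def simplexSet (K : ℕ) : Set (EuclideanSpace ℝ (Fin K)) :=
  {a | (∀ k, 0 ≤ a k) ∧ ∑ k, a k = 1}

/-- The truncated probability simplex `Δ_K^β = {α ∈ Δ_K : α_k ≥ β/K}`. -/
def truncSimplex (K : ℕ) (β : ℝ) : Set (EuclideanSpace ℝ (Fin K)) :=
  {a | (∀ k, β / K ≤ a k) ∧ ∑ k, a k = 1}

open RealInnerProductSpace Finset

/-!
Each iterate is a projected gradient step, so the usual one-step analysis of online gradient
descent applies, except that the comparator `β` need not lie in the truncated simplex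
`Δ_K^{η_t}` onto which we project. It is replaced by `(1 - η_t) β + η_t α⁽¹⁾`, which does lie
there because `α⁽¹⁾` is the uniform vector; as `‖α⁽¹⁾ - β‖² ≤ 1`, the shift costs at most `η_t²`:
`2 η_t (f_t(α_t) - f_t(β)) ≤ ‖α_t - β‖² - ‖α_{t+1} - β‖² + η_t² (G² + 1)`.
Dividing by `2 η_t` and summing, the distance terms telescope against the non-increasing step
sizes, and since `‖α_t - β‖² ≤ 2` on the simplex they contribute at most `1 / η_T`.
-/

section InnerProductSpace

variable {E : Type*} [NormedAddCommGroup E] [InnerProductSpace ℝ E]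

theorem ConvexOn.sub_le_inner_of_hasGradientAt [CompleteSpace E] {s : Set E} {f : E → ℝ}
    {g x y : E} (hf : ConvexOn ℝ s f) (hx : x ∈ s) (hy : y ∈ s) (hg : HasGradientAt f g x) :
    f x - f y ≤ ⟪g, x - y⟫ := by
  have hline : HasDerivAt (f ∘ AffineMap.lineMap x y) ⟪g, y - x⟫ (0 : ℝ) := by
    have hg' : HasFDerivAt f (InnerProductSpace.toDual ℝ E g)
        (AffineMap.lineMap (k := ℝ) x y 0) := by
      simpa using hg.hasFDerivAt
    simpa using hg'.comp_hasDerivAt (0 : ℝ) AffineMap.hasDerivAt_lineMap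
  have hslope := (hf.comp_affineMap (AffineMap.lineMap x y)).le_slope_of_hasDerivAt
    (by simpa) (by simpa) one_pos hline
  simp only [slope_def_field, Function.comp_apply, AffineMap.lineMap_apply_one,
    AffineMap.lineMap_apply_zero, sub_zero, div_one] at hslope
  rw [← neg_sub y, inner_neg_right]
  linarith

theorem real_inner_sub_le_zero_of_forall_norm_sub_le {S : Set E} (hS : Convex ℝ S) {p y z : E}
    (hp : p ∈ S) (hmin : ∀ w ∈ S, ‖p - y‖ ≤ ‖w - y‖) (hz : z ∈ S) : ⟪y - p, z - p⟫ ≤ 0 := by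
  have : Nonempty S := ⟨⟨p, hp⟩⟩
  refine (norm_eq_iInf_iff_real_inner_le_zero hS hp).1 (le_antisymm ?_ ?_) z hz
  · exact le_ciInf fun w => by simpa only [norm_sub_rev y] using hmin w w.2
  · exact ciInf_le ⟨0, by rintro _ ⟨w, rfl⟩; positivity⟩ (⟨p, hp⟩ : S)

theorem two_mul_inner_le_of_inner_le_zero {x x' a b g : E} {η : ℝ}
    (hproj : ⟪x - η • g - x', (1 - η) • b + η • a - x'⟫ ≤ 0) :
    2 * η * ⟪g, x - b⟫ ≤ ‖x - b‖ ^ 2 - ‖x' - b‖ ^ 2 + η ^ 2 * (‖g‖ ^ 2 + ‖a - b‖ ^ 2) := by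
  set ρ := x - η • g - x'
  have hsplit : ‖x - b - η • g‖ ^ 2 = ‖x' - b + ρ‖ ^ 2 := by congr 2; simp only [ρ]; abel
  rw [norm_sub_sq_real, norm_add_sq_real, real_inner_smul_right, norm_smul, mul_pow,
    Real.norm_eq_abs, sq_abs] at hsplit
  have hu : (1 - η) • b + η • a - x' = η • (a - b) - (x' - b) := by module
  rw [hu, inner_sub_right, real_inner_smul_right] at hproj
  have hsq : 0 ≤ ‖ρ + η • (a - b)‖ ^ 2 := by positivity
  rw [norm_add_sq_real, real_inner_smul_right, norm_smul, mul_pow, Real.norm_eq_abs,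
    sq_abs] at hsq
  rw [real_inner_comm (x' - b), real_inner_comm g] at *
  linarith

theorem ConvexOn.two_mul_sub_le_of_projection [CompleteSpace E] {s C : Set E} {f : E → ℝ}
    {g x x' a b : E} {η : ℝ} (hf : ConvexOn ℝ s f) (hx : x ∈ s) (hb : b ∈ s)
    (hg : HasGradientAt f g x) (hη : 0 ≤ η) (hC : Convex ℝ C) (hx' : x' ∈ C)
    (hmin : ∀ z ∈ C, ‖x' - (x - η • g)‖ ≤ ‖z - (x - η • g)‖) (hu : (1 - η) • b + η • a ∈ C) :
    2 * η * (f x - f b) ≤ ‖x - b‖ ^ 2 - ‖x' - b‖ ^ 2 + η ^ 2 * (‖g‖ ^ 2 + ‖a - b‖ ^ 2) :=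
  calc 2 * η * (f x - f b) ≤ 2 * η * ⟪g, x - b⟫ := by
        gcongr
        exact hf.sub_le_inner_of_hasGradientAt hx hb hg
    _ ≤ _ := two_mul_inner_le_of_inner_le_zero
        (real_inner_sub_le_zero_of_forall_norm_sub_le hC hx' hmin hu)

end InnerProductSpace

theorem sum_Icc_sub_div_le {η D : ℕ → ℝ} {R : ℝ} (hη : Antitone η) (hpos : ∀ t, 0 < η t)
    (hD : ∀ t, 1 ≤ t → D t ≤ R) (hD₀ : ∀ t, 0 ≤ D t) (N : ℕ) :
    ∑ t ∈ Icc 1 N, (D t - D (t + 1)) / η t ≤ R / η N := by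
  suffices ∀ N, ∑ t ∈ Icc 1 N, (D t - D (t + 1)) / η t + D (N + 1) / η N ≤ R / η N by
    linarith [this N, div_nonneg (hD₀ (N + 1)) (hpos N).le]
  intro N
  induction N with
  | zero => simpa using div_le_div_of_nonneg_right (hD 1 le_rfl) (hpos 0).le
  | succ n ih =>
    have hmono : 0 ≤ (R - D (n + 1)) * (1 / η (n + 1) - 1 / η n) :=
      mul_nonneg (sub_nonneg.2 (hD (n + 1) n.succ_pos))
        (sub_nonneg.2 (one_div_le_one_div_of_le (hpos _) (hη n.le_succ)))
    have hexpand : (R - D (n + 1)) * (1 / η (n + 1) - 1 / η n)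
        = R / η (n + 1) - R / η n - (D (n + 1) / η (n + 1) - D (n + 1) / η n) := by ring
    rw [sum_Icc_succ_top (by omega), sub_div]
    linarith

section Simplex

variable {K : ℕ}

theorem truncSimplex_zero : truncSimplex K 0 = simplexSet K := by
  simp [truncSimplex, simplexSet]

theorem truncSimplex_subset_simplexSet {β : ℝ} (hβ : 0 ≤ β) : truncSimplex K β ⊆ simplexSet K :=
  fun a ha => ⟨fun k => (by positivity : 0 ≤ β / K).trans (ha.1 k), ha.2⟩

theorem smul_add_smul_mem_truncSimplex {x y : EuclideanSpace ℝ (Fin K)} {β₁ β₂ a b : ℝ}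
    (hx : x ∈ truncSimplex K β₁) (hy : y ∈ truncSimplex K β₂) (ha : 0 ≤ a) (hb : 0 ≤ b)
    (hab : a + b = 1) : a • x + b • y ∈ truncSimplex K (a * β₁ + b * β₂) := by
  refine ⟨fun k => ?_, ?_⟩
  · have h₁ := mul_le_mul_of_nonneg_left (hx.1 k) ha
    have h₂ := mul_le_mul_of_nonneg_left (hy.1 k) hb
    simp only [PiLp.add_apply, PiLp.smul_apply, smul_eq_mul, add_div, mul_div_assoc]
    linarith
  · simp only [PiLp.add_apply, PiLp.smul_apply, smul_eq_mul, sum_add_distrib, ← mul_sum, hx.2,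
      hy.2, hab, mul_one]

theorem convex_truncSimplex (β : ℝ) : Convex ℝ (truncSimplex K β) := by
  intro x hx y hy a b ha hb hab
  simpa [← add_mul, hab] using smul_add_smul_mem_truncSimplex hx hy ha hb hab

theorem uniform_mem_truncSimplex_one {a : EuclideanSpace ℝ (Fin K)} (hK : K ≠ 0)
    (ha : ∀ k, a k = 1 / K) : a ∈ truncSimplex K 1 :=
  ⟨fun k => (ha k).ge, by simp [ha, hK]⟩

theorem ne_zero_of_mem_simplexSet {a : EuclideanSpace ℝ (Fin K)} (ha : a ∈ simplexSet K) :
    K ≠ 0 := by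
  rintro rfl
  simpa using ha.2

theorem le_one_of_mem_simplexSet {a : EuclideanSpace ℝ (Fin K)} (ha : a ∈ simplexSet K)
    (k : Fin K) : a k ≤ 1 :=
  ha.2 ▸ single_le_sum (fun i _ => ha.1 i) (mem_univ k)

theorem norm_sq_le_one_of_mem_simplexSet {a : EuclideanSpace ℝ (Fin K)}
    (ha : a ∈ simplexSet K) : ‖a‖ ^ 2 ≤ 1 := by
  rw [EuclideanSpace.real_norm_sq_eq, ← ha.2]
  exact sum_le_sum fun k _ => by nlinarith [ha.1 k, le_one_of_mem_simplexSet ha k]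

theorem norm_sub_sq_le_two_of_mem_simplexSet {a b : EuclideanSpace ℝ (Fin K)}
    (ha : a ∈ simplexSet K) (hb : b ∈ simplexSet K) : ‖a - b‖ ^ 2 ≤ 2 :=
  calc ‖a - b‖ ^ 2 = ∑ k, (a k - b k) ^ 2 := EuclideanSpace.real_norm_sq_eq _
    _ ≤ ∑ k, (a k + b k) := sum_le_sum fun k _ => by
      nlinarith [ha.1 k, hb.1 k, le_one_of_mem_simplexSet ha k, le_one_of_mem_simplexSet hb k]
    _ = 2 := by rw [sum_add_distrib, ha.2, hb.2, one_add_one_eq_two]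

theorem norm_sub_uniform_sq_le_one {a b : EuclideanSpace ℝ (Fin K)} (ha : a ∈ simplexSet K)
    (hb : ∀ k, b k = 1 / K) : ‖a - b‖ ^ 2 ≤ 1 := by
  have hK : (K : ℝ) ≠ 0 := Nat.cast_ne_zero.2 (ne_zero_of_mem_simplexSet ha)
  calc ‖a - b‖ ^ 2 = ∑ k, (a k ^ 2 - (2 * a k - 1 / K) / K) := by
        simp only [EuclideanSpace.real_norm_sq_eq, PiLp.sub_apply, hb]
        exact sum_congr rfl fun k _ => by ring
    _ = ‖a‖ ^ 2 - 1 / K := by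
        rw [sum_sub_distrib, ← sum_div, sum_sub_distrib, ← mul_sum, ha.2, sum_const, card_univ,
          Fintype.card_fin, nsmul_eq_mul, mul_one_div_cancel hK, EuclideanSpace.real_norm_sq_eq]
        ring
    _ ≤ 1 := by
        linarith [norm_sq_le_one_of_mem_simplexSet ha, (by positivity : (0 : ℝ) ≤ 1 / K)]

theorem sub_le_of_truncSimplex_projection {f : EuclideanSpace ℝ (Fin K) → ℝ}
    {g x x' a b : EuclideanSpace ℝ (Fin K)} {η G : ℝ} (hf : ConvexOn ℝ (simplexSet K) f)
    (hx : x ∈ simplexSet K) (hb : b ∈ simplexSet K) (hg : HasGradientAt f g x) (hgG : ‖g‖ ≤ G)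
    (hη : η ∈ Set.Ioc 0 1) (ha : ∀ k, a k = 1 / K) (hx' : x' ∈ truncSimplex K η)
    (hmin : ∀ z ∈ truncSimplex K η, ‖x' - (x - η • g)‖ ≤ ‖z - (x - η • g)‖) :
    f x - f b ≤ (‖x - b‖ ^ 2 - ‖x' - b‖ ^ 2) / (2 * η) + (G ^ 2 + 1) / 2 * η := by
  obtain ⟨hη₀, hη₁⟩ := hη
  have hu : (1 - η) • b + η • a ∈ truncSimplex K η := by
    have hb₀ : b ∈ truncSimplex K 0 := truncSimplex_zero ▸ hb
    have ha₁ := uniform_mem_truncSimplex_one (ne_zero_of_mem_simplexSet hb) ha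
    simpa using smul_add_smul_mem_truncSimplex hb₀ ha₁ (sub_nonneg.2 hη₁) hη₀.le (by ring)
  have hstep :=
    hf.two_mul_sub_le_of_projection hx hb hg hη₀.le (convex_truncSimplex η) hx' hmin hu
  have hg2 : ‖g‖ ^ 2 ≤ G ^ 2 := pow_le_pow_left₀ (norm_nonneg g) hgG 2
  have hab : ‖a - b‖ ^ 2 ≤ 1 := norm_sub_rev a b ▸ norm_sub_uniform_sq_le_one hb ha
  calc f x - f b = 2 * η * (f x - f b) / (2 * η) := by field_simp
    _ ≤ (‖x - b‖ ^ 2 - ‖x' - b‖ ^ 2 + η ^ 2 * (G ^ 2 + 1)) / (2 * η) := by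
        gcongr
        exact hstep.trans (by gcongr)
    _ = _ := by field_simp

end Simplex

theorem stmt11_general {K : ℕ} (T : ℕ)
    (f : ℕ → EuclideanSpace ℝ (Fin K) → ℝ)
    (g : ℕ → EuclideanSpace ℝ (Fin K) → EuclideanSpace ℝ (Fin K))
    (G : ℝ) (η : ℕ → ℝ) (α : ℕ → EuclideanSpace ℝ (Fin K))
    (hconv : ∀ t, ConvexOn ℝ (simplexSet K) (f t))
    (hgrad : ∀ t, ∀ x ∈ simplexSet K, HasGradientAt (f t) (g t x) x)
    (hG : ∀ t, ∀ x ∈ simplexSet K, ‖g t x‖ ≤ G)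
    (hη : ∀ t, η t ∈ Set.Icc (0:ℝ) 1) (hηanti : Antitone η)
    (hηpos : ∀ t, 0 < η t)
    (hinit : ∀ k, α 1 k = 1 / (K : ℝ))
    (hmem : ∀ t, α (t + 1) ∈ truncSimplex K (η t))
    (hproj : ∀ t, ∀ y ∈ truncSimplex K (η t),
      ‖α (t + 1) - (α t - η t • g t (α t))‖ ≤ ‖y - (α t - η t • g t (α t))‖)
    (β : EuclideanSpace ℝ (Fin K)) (hβ : β ∈ simplexSet K) :
    ∑ t ∈ Finset.Icc 1 T, f t (α t) - ∑ t ∈ Finset.Icc 1 T, f t β ≤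
      1 / η T + (G ^ 2 + 1) / 2 * ∑ t ∈ Finset.Icc 1 T, η t := by
  have hα : ∀ t, 1 ≤ t → α t ∈ simplexSet K := by
    rintro (_ | t) ht
    · omega
    · exact truncSimplex_subset_simplexSet (hηpos t).le (hmem t)
  have htele := sum_Icc_sub_div_le (η := fun t => 2 * η t) (D := fun t => ‖α t - β‖ ^ 2) (R := 2)
    (hηanti.const_mul zero_le_two) (fun t => mul_pos two_pos (hηpos t))
    (fun t ht => norm_sub_sq_le_two_of_mem_simplexSet (hα t ht) hβ) (fun t => by positivity) T
  calc ∑ t ∈ Icc 1 T, f t (α t) - ∑ t ∈ Icc 1 T, f t β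
      = ∑ t ∈ Icc 1 T, (f t (α t) - f t β) := (sum_sub_distrib _ _).symm
    _ ≤ ∑ t ∈ Icc 1 T, ((‖α t - β‖ ^ 2 - ‖α (t + 1) - β‖ ^ 2) / (2 * η t)
          + (G ^ 2 + 1) / 2 * η t) := sum_le_sum fun t ht => by
        have hαt := hα t (mem_Icc.1 ht).1
        exact sub_le_of_truncSimplex_projection (hconv t) hαt hβ (hgrad t _ hαt) (hG t _ hαt)
          ⟨hηpos t, (hη t).2⟩ hinit (hmem t) (hproj t)
    _ = ∑ t ∈ Icc 1 T, (‖α t - β‖ ^ 2 - ‖α (t + 1) - β‖ ^ 2) / (2 * η t)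
          + (G ^ 2 + 1) / 2 * ∑ t ∈ Icc 1 T, η t := by rw [sum_add_distrib, mul_sum]
    _ ≤ 2 / (2 * η T) + (G ^ 2 + 1) / 2 * ∑ t ∈ Icc 1 T, η t := by gcongr
    _ = 1 / η T + (G ^ 2 + 1) / 2 * ∑ t ∈ Icc 1 T, η t := by
        rw [div_mul_cancel_left₀ two_ne_zero, one_div]

/-- Regret bound for online gradient descent with projections onto
gradually truncated simplices. -/
theorem stmt11 {K : ℕ} (hK : 1 ≤ K) (T : ℕ) (hT : 1 ≤ T)
    (f : ℕ → EuclideanSpace ℝ (Fin K) → ℝ)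
    (g : ℕ → EuclideanSpace ℝ (Fin K) → EuclideanSpace ℝ (Fin K))
    (G : ℝ) (η : ℕ → ℝ) (α : ℕ → EuclideanSpace ℝ (Fin K))
    (hconv : ∀ t, ConvexOn ℝ (simplexSet K) (f t))
    (hgrad : ∀ t, ∀ x ∈ simplexSet K, HasGradientAt (f t) (g t x) x)
    (hG : ∀ t, ∀ x ∈ simplexSet K, ‖g t x‖ ≤ G)
    (hη : ∀ t, η t ∈ Set.Icc (0:ℝ) 1) (hηanti : Antitone η)
    (hηpos : ∀ t, 0 < η t)
    (hinit : ∀ k, α 1 k = 1 / (K : ℝ))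
    (hmem : ∀ t, α (t + 1) ∈ truncSimplex K (η t))
    (hproj : ∀ t, ∀ y ∈ truncSimplex K (η t),
      ‖α (t + 1) - (α t - η t • g t (α t))‖ ≤ ‖y - (α t - η t • g t (α t))‖)
    (β : EuclideanSpace ℝ (Fin K)) (hβ : β ∈ simplexSet K) :
    ∑ t ∈ Finset.Icc 1 T, f t (α t) - ∑ t ∈ Finset.Icc 1 T, f t β ≤
      1 / η T + (G ^ 2 + 1) / 2 * ∑ t ∈ Finset.Icc 1 T, η t :=
  stmt11_general T f g G η α hconv hgrad hG hη hηanti hηpos hinit hmem hproj β hβ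
end

section
/- Let f : Δ_K → ℝ be a piecewise-linear convex function with minimizer set Δ_K^* = argmin f. Then g* = inf_{α ∈ Δ_K \ Δ_K^*} max_{α* ∈ Δ_K^*} (f(α) − f(α*))/‖α − α*‖ is strictly positive. -/
open Set Filter Topology

section Polyhedron

variable {E : Type*} [AddCommGroup E] [Module ℝ E]

def polyhedron (A : Set (E →ᵃ[ℝ] ℝ)) : Set E := ⋂ a ∈ A, {x | 0 ≤ a x}

@[simp] lemma mem_polyhedron {A : Set (E →ᵃ[ℝ] ℝ)} {x : E} :
    x ∈ polyhedron A ↔ ∀ a ∈ A, 0 ≤ a x := by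
  simp [polyhedron]

lemma convex_polyhedron (A : Set (E →ᵃ[ℝ] ℝ)) : Convex ℝ (polyhedron A) :=
  convex_iInter₂ fun a _ => (convex_Ici 0).affine_preimage a

lemma injOn_activeSet_extremePoints_polyhedron {A : Set (E →ᵃ[ℝ] ℝ)} (hA : A.Finite) :
    InjOn (fun x => {a ∈ A | a x = 0}) ((polyhedron A).extremePoints ℝ) := by
  intro x hx y _ hxy
  have hact : ∀ a ∈ A, a x = 0 → a y = 0 := fun a ha h =>
    ((Set.ext_iff.1 hxy a).1 ⟨ha, h⟩).2
  have hline : ∀ (a : E →ᵃ[ℝ] ℝ) (s : ℝ), a (x + s • (x - y)) = a x + s * (a x - a y) := by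
    intro a s
    rw [add_comm, ← vadd_eq_add, a.map_vadd, map_smul, ← vsub_eq_sub, a.linearMap_vsub]
    simp [add_comm]
  -- Moving from `x` along the line through `y` keeps active constraints at `0` and, for a short
  -- while, inactive ones positive.
  have hnear : ∀ᶠ s in 𝓝 (0 : ℝ), x + s • (x - y) ∈ polyhedron A := by
    simp only [mem_polyhedron]
    refine (eventually_all_finite hA).2 fun a ha => ?_
    rcases (mem_polyhedron.1 hx.1 a ha).eq_or_lt with h | h
    · exact Eventually.of_forall fun s => by simp [hline, ← h, hact a ha h.symm]
    · have hcont : Tendsto (fun s : ℝ => a x + s * (a x - a y)) (𝓝 0) (𝓝 (a x)) :=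
        (by fun_prop : Continuous fun s : ℝ => a x + s * (a x - a y)).tendsto' 0 _ (by simp)
      exact (hcont.eventually (lt_mem_nhds h)).mono fun s hs => by rw [hline]; exact hs.le
  obtain ⟨ε, hε, hball⟩ := Metric.eventually_nhds_iff_ball.1 hnear
  have hmid : x + (ε / 2) • (x - y) = x := by
    refine hx.2 (hball _ ?_) (hball (-(ε / 2)) ?_) ⟨1 / 2, 1 / 2, by norm_num, by norm_num,
      by norm_num, by module⟩ <;> simp [abs_of_pos hε, hε]
  have : ε / 2 ≠ 0 := by positivity
  simpa [this, sub_eq_zero] using hmid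

lemma finite_extremePoints_polyhedron {A : Set (E →ᵃ[ℝ] ℝ)} (hA : A.Finite) :
    ((polyhedron A).extremePoints ℝ).Finite :=
  (hA.finite_subsets.subset (by rintro _ ⟨x, -, rfl⟩ a ha; exact ha.1)).of_finite_image
    (injOn_activeSet_extremePoints_polyhedron hA)

lemma exists_polyhedron_eq_truncated_epigraph {A : Set (E →ᵃ[ℝ] ℝ)} (hA : A.Finite)
    {ι : Type*} (s : Finset ι) (φ : ι → E →ᵃ[ℝ] ℝ) (T : ℝ) :
    ∃ B : Set (E × ℝ →ᵃ[ℝ] ℝ), B.Finite ∧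
      polyhedron B = {p | p.1 ∈ polyhedron A ∧ (∀ i ∈ s, φ i p.1 ≤ p.2) ∧ p.2 ≤ T} := by
  let fst : E × ℝ →ᵃ[ℝ] E := (LinearMap.fst ℝ E ℝ).toAffineMap
  let snd : E × ℝ →ᵃ[ℝ] ℝ := (LinearMap.snd ℝ E ℝ).toAffineMap
  refine ⟨(fun a => a.comp fst) '' A ∪ (fun i => snd - (φ i).comp fst) '' ↑s ∪
      {AffineMap.const ℝ (E × ℝ) T - snd},
    ((hA.image _).union (s.finite_toSet.image _)).union (finite_singleton _), ?_⟩
  ext p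
  simp [fst, snd, or_imp, forall_and]
  tauto

end Polyhedron

section SharpMinimum

variable {E : Type*} [NormedAddCommGroup E] [NormedSpace ℝ E]

lemma isClosed_polyhedron [FiniteDimensional ℝ E] (A : Set (E →ᵃ[ℝ] ℝ)) :
    IsClosed (polyhedron A) :=
  isClosed_biInter fun a _ => isClosed_Ici.preimage a.continuous_of_finiteDimensional

lemma exists_finset_polyhedron_eq_convexHull {A : Set (E →ᵃ[ℝ] ℝ)} (hA : A.Finite)
    (hP : IsCompact (polyhedron A)) : ∃ V : Finset E, polyhedron A = convexHull ℝ (V : Set E) := by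
  have hfin := finite_extremePoints_polyhedron hA
  refine ⟨hfin.toFinset, ?_⟩
  rw [hfin.coe_toFinset, ← (hfin.isClosed_convexHull ℝ).closure_eq,
    closure_convexHull_extremePoints hP (convex_polyhedron A)]

lemma exists_sharp_min_on_convexHull (V : Finset E) (L : E →ₗ[ℝ] ℝ) :
    ∃ C > 0, ∀ x ∈ convexHull ℝ (V : Set E), ∃ y ∈ convexHull ℝ (V : Set E),
      IsMinOn L (convexHull ℝ (V : Set E)) y ∧ ‖x - y‖ ≤ C * (L x - L y) := by
  rcases V.eq_empty_or_nonempty with rfl | hV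
  · exact ⟨1, one_pos, by simp⟩
  obtain ⟨v₀, hv₀, hv₀min⟩ := V.exists_min_image L hV
  have hmin : ∀ z ∈ convexHull ℝ (V : Set E), L v₀ ≤ L z := fun z hz => by
    obtain ⟨v, hv, hvz⟩ := (L.concaveOn (convex_convexHull ℝ _)).exists_le_of_mem_convexHull
      (subset_convexHull ℝ _) hz
    exact (hv₀min v hv).trans hvz
  let φ : E → E := fun v => if L v = L v₀ then v else v₀
  have hφ : ∀ v ∈ V, φ v ∈ V ∧ L (φ v) = L v₀ := fun v hv => by
    by_cases h : L v = L v₀ <;> simp [φ, h, hv, hv₀]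
  have hC : ∀ᶠ C in atTop, 0 < C ∧ ∀ v ∈ V, ‖v - φ v‖ ≤ C * (L v - L v₀) := by
    refine (eventually_gt_atTop 0).and ((eventually_all_finset V).2 fun v hv => ?_)
    by_cases h : L v = L v₀
    · exact Eventually.of_forall fun C => by simp [φ, h]
    · have hpos : 0 < L v - L v₀ := sub_pos.2 ((hv₀min v hv).lt_of_ne' h)
      filter_upwards [eventually_ge_atTop (‖v - v₀‖ / (L v - L v₀))] with C hC
      simpa [φ, h] using (div_le_iff₀ hpos).1 hC
  obtain ⟨C, hC0, hCv⟩ := hC.exists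
  refine ⟨C, hC0, fun x hx => ?_⟩
  obtain ⟨θ, hθ0, hθ1, rfl⟩ := Finset.mem_convexHull'.1 hx
  have hLy : L (∑ v ∈ V, θ v • φ v) = L v₀ := by
    simp [map_sum, Finset.sum_congr rfl fun v hv => congrArg (θ v * ·) (hφ v hv).2,
      ← Finset.sum_mul, hθ1]
  refine ⟨∑ v ∈ V, θ v • φ v,
    (convex_convexHull ℝ _).sum_mem hθ0 hθ1 fun v hv => subset_convexHull ℝ _ (hφ v hv).1,
    isMinOn_iff.2 fun z hz => hLy.trans_le (hmin z hz), ?_⟩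
  calc ‖∑ v ∈ V, θ v • v - ∑ v ∈ V, θ v • φ v‖ = ‖∑ v ∈ V, θ v • (v - φ v)‖ := by
        simp [smul_sub, Finset.sum_sub_distrib]
    _ ≤ ∑ v ∈ V, θ v * ‖v - φ v‖ := by
        refine (norm_sum_le _ _).trans (Finset.sum_le_sum fun v hv => ?_)
        rw [norm_smul, Real.norm_of_nonneg (hθ0 v hv)]
    _ ≤ ∑ v ∈ V, θ v * (C * (L v - L v₀)) :=
        Finset.sum_le_sum fun v hv => mul_le_mul_of_nonneg_left (hCv v hv) (hθ0 v hv)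
    _ = C * (∑ v ∈ V, θ v * L v - L v₀) := by
        rw [mul_sub, Finset.mul_sum, ← mul_one (C * L v₀), ← hθ1, Finset.mul_sum,
          ← Finset.sum_sub_distrib]
        exact Finset.sum_congr rfl fun v _ => by ring
    _ = C * (L (∑ v ∈ V, θ v • v) - L (∑ v ∈ V, θ v • φ v)) := by simp [hLy, map_sum]

theorem exists_sharp_min_sup'_on_polyhedron [FiniteDimensional ℝ E] {A : Set (E →ᵃ[ℝ] ℝ)}
    (hA : A.Finite) (hP : IsCompact (polyhedron A)) {ι : Type*} (s : Finset ι) (hs : s.Nonempty)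
    (φ : ι → E →ᵃ[ℝ] ℝ) :
    ∃ g > 0, ∀ x ∈ polyhedron A, ∃ y ∈ polyhedron A,
      IsMinOn (fun z => s.sup' hs fun i => φ i z) (polyhedron A) y ∧
      g * ‖x - y‖ ≤ (s.sup' hs fun i => φ i x) - s.sup' hs fun i => φ i y := by
  set P := polyhedron A
  set F : E → ℝ := fun z => s.sup' hs fun i => φ i z
  have hF : Continuous F :=
    Continuous.finset_sup'_apply hs fun i _ => (φ i).continuous_of_finiteDimensional
  obtain ⟨T, hT⟩ := hP.bddAbove_image hF.continuousOn
  obtain ⟨lo, hlo⟩ := hP.bddBelow_image hF.continuousOn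
  obtain ⟨B, hB, hBeq⟩ := exists_polyhedron_eq_truncated_epigraph hA s φ T
  have hQ : ∀ p : E × ℝ, p ∈ polyhedron B ↔ p.1 ∈ P ∧ F p.1 ≤ p.2 ∧ p.2 ≤ T := fun p => by
    simp only [hBeq, F, Finset.sup'_le_iff]; rfl
  have hQc : IsCompact (polyhedron B) :=
    (hP.prod (isCompact_Icc (a := lo) (b := T))).of_isClosed_subset (isClosed_polyhedron B)
      fun p hp => by
        obtain ⟨h1, h2, h3⟩ := (hQ p).1 hp
        exact ⟨h1, (hlo (mem_image_of_mem F h1)).trans h2, h3⟩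
  have hgraph : ∀ z ∈ P, (z, F z) ∈ polyhedron B := fun z hz =>
    (hQ _).2 ⟨hz, le_rfl, hT (mem_image_of_mem F hz)⟩
  obtain ⟨V, hV⟩ := exists_finset_polyhedron_eq_convexHull hB hQc
  obtain ⟨C, hC, hsharp⟩ := exists_sharp_min_on_convexHull V (LinearMap.snd ℝ E ℝ)
  refine ⟨C⁻¹, inv_pos.2 hC, fun x hx => ?_⟩
  obtain ⟨⟨y, t⟩, hq, hmin, hdist⟩ := hsharp (x, F x) (hV ▸ hgraph x hx)
  obtain ⟨hy, hFy, -⟩ := (hQ _).1 (hV ▸ hq)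
  have ht : ∀ z ∈ P, t ≤ F z := fun z hz => isMinOn_iff.1 hmin _ (hV ▸ hgraph z hz)
  have hFyt : F y = t := le_antisymm hFy (ht y hy)
  refine ⟨y, hy, isMinOn_iff.2 fun z hz => hFyt ▸ ht z hz, ?_⟩
  change C⁻¹ * ‖x - y‖ ≤ F x - F y
  rw [inv_mul_le_iff₀ hC, hFyt]
  exact (norm_fst_le ((x, F x) - (y, t))).trans hdist

end SharpMinimum

lemma isCompact_simplexSet (K : ℕ) : IsCompact (simplexSet K) :=
  (EuclideanSpace.equiv (Fin K) ℝ).toHomeomorph.isCompact_preimage.2 (isCompact_stdSimplex ℝ _)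

lemma exists_polyhedron_eq_simplexSet (K : ℕ) :
    ∃ A : Set (EuclideanSpace ℝ (Fin K) →ᵃ[ℝ] ℝ), A.Finite ∧ polyhedron A = simplexSet K := by
  let σ : EuclideanSpace ℝ (Fin K) →ᵃ[ℝ] ℝ :=
    (∑ k, (EuclideanSpace.proj k : EuclideanSpace ℝ (Fin K) →L[ℝ] ℝ).toLinearMap).toAffineMap
  refine ⟨range (fun k => (EuclideanSpace.proj k : EuclideanSpace ℝ (Fin K) →L[ℝ] ℝ)
      |>.toLinearMap.toAffineMap) ∪ {σ - AffineMap.const ℝ _ 1, AffineMap.const ℝ _ 1 - σ},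
    (finite_range _).union ((finite_singleton _).insert _), ?_⟩
  ext x
  simp [simplexSet, σ, or_imp, forall_and, le_antisymm_iff]
  tauto

theorem stmt15_general {K n : ℕ}
    (hne : (Finset.univ : Finset (Fin n)).Nonempty)
    (c : Fin n → EuclideanSpace ℝ (Fin K)) (b : Fin n → ℝ)
    (f : EuclideanSpace ℝ (Fin K) → ℝ)
    (hf : ∀ x, f x = Finset.univ.sup' hne (fun i => ∑ k, c i k * x k + b i))
    (S : Set (EuclideanSpace ℝ (Fin K)))
    (hS : S = simplexSet K ∩ {x | ∀ y ∈ simplexSet K, f x ≤ f y}) :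
    ∃ g : ℝ, 0 < g ∧ ∀ α ∈ simplexSet K, α ∉ S →
      ∃ αs ∈ S, g * ‖α - αs‖ ≤ f α - f αs := by
  obtain ⟨A, hA, hΔ⟩ := exists_polyhedron_eq_simplexSet K
  let φ : Fin n → EuclideanSpace ℝ (Fin K) →ᵃ[ℝ] ℝ := fun i =>
    (innerₛₗ ℝ (c i)).toAffineMap + AffineMap.const ℝ _ (b i)
  have hfφ : ∀ x, f x = Finset.univ.sup' hne fun i => φ i x := fun x => by
    simp [hf, φ, PiLp.inner_apply, mul_comm]
  obtain ⟨g, hg, hsharp⟩ :=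
    exists_sharp_min_sup'_on_polyhedron hA (hΔ ▸ isCompact_simplexSet K) Finset.univ hne φ
  simp only [hΔ, ← hfφ] at hsharp
  refine ⟨g, hg, fun α hα _ => ?_⟩
  obtain ⟨y, hy, hmin, hle⟩ := hsharp α hα
  exact ⟨y, hS ▸ ⟨hy, isMinOn_iff.1 hmin⟩, hle⟩

/-- For a piecewise-linear convex function on the simplex with minimizer set
`S`, the quantity `g* = inf_{α ∉ S} max_{α* ∈ S} (f(α) − f(α*))/‖α − α*‖` is
strictly positive: there is `g > 0` with `g‖α − α*‖ ≤ f(α) − f(α*)` for some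
minimizer `α*` depending on `α`. -/
theorem stmt15 {K n : ℕ} (hK : 1 ≤ K)
    (hne : (Finset.univ : Finset (Fin n)).Nonempty)
    (c : Fin n → EuclideanSpace ℝ (Fin K)) (b : Fin n → ℝ)
    (f : EuclideanSpace ℝ (Fin K) → ℝ)
    (hf : ∀ x, f x = Finset.univ.sup' hne (fun i => ∑ k, c i k * x k + b i))
    (S : Set (EuclideanSpace ℝ (Fin K)))
    (hS : S = simplexSet K ∩ {x | ∀ y ∈ simplexSet K, f x ≤ f y}) :
    ∃ g : ℝ, 0 < g ∧ ∀ α ∈ simplexSet K, α ∉ S →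
      ∃ αs ∈ S, g * ‖α - αs‖ ≤ f α - f αs :=
  stmt15_general hne c b f hf S hS
end
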